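/- arXiv:2505.11744 — 4 statements merged into one kernel-verified Lean document; each statement's English description precedes it below -/
import Mathlib

section
/- Correctness identity for multi-authority attribute-based IPFE decryption (the algebraic core of Theorem 6.1): Let q be a positive modulus, ι a finite index set of authorities, and n, m, m' natural numbers. Suppose given over ℤ_q: matrices A_i ∈ ℤ_q^{n×m}, B_i ∈ ℤ_q^{n×m'}, P_i ∈ ℤ_q^{n×m} for each i ∈ ι, a matrix G ∈ ℤ_q^{n×m}, vectors s_i ∈ ℤ_q^n, e_{1,i} ∈ ℤ_q^m, k_i ∈ ℤ_q^m for each i ∈ ι, and vectors e_2 ∈ ℤ_q^{m'}, e_3 ∈ ℤ_q^m, u, v ∈ ℤ_q^n, r ∈ ℤ_q^{m'}, w ∈ ℤ_q^m. Assume G·w = v and, for every i ∈ ι, A_i·k_i = P_i·w + B_i·r. Define the ciphertext components c_{1,i}ᵀ := s_iᵀA_i + e_{1,i}ᵀ, c_2ᵀ := Σ_{i∈ι} s_iᵀB_i + e_2ᵀ, and c_3ᵀ := Σ_{i∈ι} s_iᵀP_i + e_3ᵀ + uᵀG. Then the decryption value satisfies c_3ᵀw + c_2ᵀr − Σ_{i∈ι}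 c_{1,i}ᵀk_i = uᵀv + (e_3ᵀw + e_2ᵀr − Σ_{i∈ι} e_{1,i}ᵀk_i). -/
/-!
Each error-free part of the ciphertext is a linear form `sᵀM` in the secrets, and pairing it
with the key material turns it into `sᵀ(M·x)`. The key equation `A_i k_i = P_i w + B_i r` makes
the authority terms `s_iᵀA_i k_i` cancel exactly against `s_iᵀP_i w + s_iᵀB_i r` from `c₃` and
`c₂`, and `uᵀG w = uᵀv` is what remains, besides the noise.
-/

open Matrix

theorem Matrix.vecMul_add_dotProduct_of_mulVec_eq {R m n : Type*} [CommRing R] [Fintype m]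
    [Fintype n] {M : Matrix m n R} {k : n → R} {x : m → R} (hk : M *ᵥ k = x) (s : m → R)
    (e : n → R) :
    (s ᵥ* M + e) ⬝ᵥ k = s ⬝ᵥ x + e ⬝ᵥ k := by
  rw [add_dotProduct, ← dotProduct_mulVec, hk]

theorem maabipfe_decryption_identity_general
    (q : ℕ)
    {ι : Type*} [Fintype ι] (n m m' : ℕ)
    (A : ι → Matrix (Fin n) (Fin m) (ZMod q))
    (B : ι → Matrix (Fin n) (Fin m') (ZMod q))
    (P : ι → Matrix (Fin n) (Fin m) (ZMod q))
    (G : Matrix (Fin n) (Fin m) (ZMod q))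
    (s : ι → Fin n → ZMod q)
    (e1 : ι → Fin m → ZMod q)
    (k : ι → Fin m → ZMod q)
    (e2 : Fin m' → ZMod q) (e3 : Fin m → ZMod q)
    (u v : Fin n → ZMod q) (r : Fin m' → ZMod q) (w : Fin m → ZMod q)
    (hGw : G.mulVec w = v)
    (hk : ∀ i, (A i).mulVec (k i) = (P i).mulVec w + (B i).mulVec r)
    (c1 : ι → Fin m → ZMod q) (c2 : Fin m' → ZMod q) (c3 : Fin m → ZMod q)
    (hc1 : ∀ i, c1 i = Matrix.vecMul (s i) (A i) + e1 i)
    (hc2 : c2 = (∑ i, Matrix.vecMul (s i) (B i)) + e2)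
    (hc3 : c3 = (∑ i, Matrix.vecMul (s i) (P i)) + e3 + Matrix.vecMul u G) :
    c3 ⬝ᵥ w + c2 ⬝ᵥ r - ∑ i, c1 i ⬝ᵥ k i
      = u ⬝ᵥ v + (e3 ⬝ᵥ w + e2 ⬝ᵥ r - ∑ i, e1 i ⬝ᵥ k i) := by
  have hc1k : ∀ i, c1 i ⬝ᵥ k i = s i ⬝ᵥ (P i *ᵥ w) + s i ⬝ᵥ (B i *ᵥ r) + e1 i ⬝ᵥ k i := by
    intro i
    rw [hc1, vecMul_add_dotProduct_of_mulVec_eq (hk i), dotProduct_add]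
  simp only [hc1k, hc2, hc3, ← hGw, add_dotProduct, sum_dotProduct, ← dotProduct_mulVec,
    Finset.sum_add_distrib]
  ring

/-- Correctness identity for multi-authority attribute-based IPFE decryption
(the algebraic core of Theorem 6.1). -/
theorem maabipfe_decryption_identity
    (q : ℕ) (hq : 0 < q)
    {ι : Type*} [Fintype ι] (n m m' : ℕ)
    (A : ι → Matrix (Fin n) (Fin m) (ZMod q))
    (B : ι → Matrix (Fin n) (Fin m') (ZMod q))
    (P : ι → Matrix (Fin n) (Fin m) (ZMod q))
    (G : Matrix (Fin n) (Fin m) (ZMod q))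
    (s : ι → Fin n → ZMod q)
    (e1 : ι → Fin m → ZMod q)
    (k : ι → Fin m → ZMod q)
    (e2 : Fin m' → ZMod q) (e3 : Fin m → ZMod q)
    (u v : Fin n → ZMod q) (r : Fin m' → ZMod q) (w : Fin m → ZMod q)
    (hGw : G.mulVec w = v)
    (hk : ∀ i, (A i).mulVec (k i) = (P i).mulVec w + (B i).mulVec r)
    (c1 : ι → Fin m → ZMod q) (c2 : Fin m' → ZMod q) (c3 : Fin m → ZMod q)
    (hc1 : ∀ i, c1 i = Matrix.vecMul (s i) (A i) + e1 i)
    (hc2 : c2 = (∑ i, Matrix.vecMul (s i) (B i)) + e2)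
    (hc3 : c3 = (∑ i, Matrix.vecMul (s i) (P i)) + e3 + Matrix.vecMul u G) :
    c3 ⬝ᵥ w + c2 ⬝ᵥ r - ∑ i, c1 i ⬝ᵥ k i
      = u ⬝ᵥ v + (e3 ⬝ᵥ w + e2 ⬝ᵥ r - ∑ i, e1 i ⬝ᵥ k i) :=
  maabipfe_decryption_identity_general q n m m' A B P G s e1 k e2 e3 u v r w hGw hk c1 c2 c3 hc1 hc2
    hc3
end

section
/- Decryption noise bound (the quantitative part of Theorem 6.1): Let λ, χ, χ' be nonnegative real numbers, m, m', L natural numbers, and ι a finite index set with |ι| ≤ L. Let e_3, w ∈ ℤ^m, e_2, r ∈ ℤ^{m'}, and e_{1,i}, k_i ∈ ℤ^m for i ∈ ι be integer vectors such that: every entry of w lies in {0,1}; every entry of e_3, of e_2, of each e_{1,i}, and of each k_i has absolute value at most √λ·χ; and every entry of r has absolute value at most √λ·χ'. Then |e_3ᵀw + e_2ᵀr − Σ_{i∈ι} e_{1,i}ᵀk_i| ≤ √λ·χ·m + λ·χ·χ'·m' + λ·χ²·m·L, where all products are interpreted in ℝ. -/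
/-!
Bound each inner product termwise: a dot product of length `n` of vectors with entries bounded
by `a` and `b` is at most `n · a · b` in absolute value. The binary `w` has entries bounded by `1`,
`√λ · √λ = λ` turns the products of bounds into the stated constants, and the at most `L`
authorities contribute the factor `L`.
-/

open Matrix

section

variable {R n : Type*} [Fintype n] [CommRing R] [LinearOrder R] [IsStrictOrderedRing R]

theorem abs_dotProduct_le {x y : n → R} {a b : R} (hx : ∀ j, |x j| ≤ a) (hy : ∀ j, |y j| ≤ b) :
    |x ⬝ᵥ y| ≤ Fintype.card n * (a * b) := by
  calc |x ⬝ᵥ y| ≤ ∑ j, |x j| * |y j| := by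
        simpa only [dotProduct, abs_mul] using Finset.abs_sum_le_sum_abs (fun j => x j * y j) .univ
    _ ≤ ∑ _j : n, a * b := Finset.sum_le_sum fun j _ =>
        mul_le_mul (hx j) (hy j) (abs_nonneg _) ((abs_nonneg _).trans (hx j))
    _ = Fintype.card n * (a * b) := by simp

theorem abs_sum_dotProduct_le {ι : Type*} [Fintype ι] {x y : ι → n → R} {a b : R}
    (hx : ∀ i j, |x i j| ≤ a) (hy : ∀ i j, |y i j| ≤ b) :
    |∑ i, x i ⬝ᵥ y i| ≤ Fintype.card ι * (Fintype.card n * (a * b)) := by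
  calc |∑ i, x i ⬝ᵥ y i| ≤ ∑ i, |x i ⬝ᵥ y i| := Finset.abs_sum_le_sum_abs _ _
    _ ≤ ∑ _i : ι, Fintype.card n * (a * b) :=
        Finset.sum_le_sum fun i _ => abs_dotProduct_le (hx i) (hy i)
    _ = Fintype.card ι * (Fintype.card n * (a * b)) := by simp

end

theorem Int.cast_dotProduct {R n : Type*} [Ring R] [Fintype n] (x y : n → ℤ) :
    ((x ⬝ᵥ y : ℤ) : R) = (fun j => (x j : R)) ⬝ᵥ fun j => (y j : R) :=
  RingHom.map_dotProduct (Int.castRingHom R) x y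

theorem maabipfe_noise_bound_general
    (lam χ χ' : ℝ) (hlam : 0 ≤ lam)
    (m m' L : ℕ)
    {ι : Type*} [Fintype ι] (hι : Fintype.card ι ≤ L)
    (e3 w : Fin m → ℤ) (e2 r : Fin m' → ℤ)
    (e1 k : ι → Fin m → ℤ)
    (hw : ∀ j, w j = 0 ∨ w j = 1)
    (he3 : ∀ j, |(e3 j : ℝ)| ≤ Real.sqrt lam * χ)
    (he2 : ∀ j, |(e2 j : ℝ)| ≤ Real.sqrt lam * χ)
    (he1 : ∀ i j, |(e1 i j : ℝ)| ≤ Real.sqrt lam * χ)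
    (hk : ∀ i j, |(k i j : ℝ)| ≤ Real.sqrt lam * χ)
    (hr : ∀ j, |(r j : ℝ)| ≤ Real.sqrt lam * χ') :
    |((e3 ⬝ᵥ w + e2 ⬝ᵥ r - ∑ i, e1 i ⬝ᵥ k i : ℤ) : ℝ)|
      ≤ Real.sqrt lam * χ * m + lam * χ * χ' * m' + lam * χ ^ 2 * m * L := by
  have hs : Real.sqrt lam * Real.sqrt lam = lam := Real.mul_self_sqrt hlam
  have hw1 : ∀ j, |(w j : ℝ)| ≤ 1 := fun j => by rcases hw j with h | h <;> simp [h]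
  have h1 := abs_dotProduct_le he3 hw1
  have h2 := abs_dotProduct_le he2 hr
  have h3 := abs_sum_dotProduct_le he1 hk
  have hL : (Fintype.card ι : ℝ) ≤ L := by exact_mod_cast hι
  have hsq : 0 ≤ (m : ℝ) * (Real.sqrt lam * χ * (Real.sqrt lam * χ)) :=
    mul_nonneg m.cast_nonneg (mul_self_nonneg _)
  simp only [Fintype.card_fin] at h1 h2 h3
  push_cast [Int.cast_dotProduct]
  set d3 := (fun j => (e3 j : ℝ)) ⬝ᵥ fun j => (w j : ℝ)
  set d2 := (fun j => (e2 j : ℝ)) ⬝ᵥ fun j => (r j : ℝ)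
  set d1 := ∑ i, (fun j => (e1 i j : ℝ)) ⬝ᵥ fun j => (k i j : ℝ)
  calc |d3 + d2 - d1| ≤ |d3| + |d2| + |d1| :=
        (abs_sub _ _).trans (add_le_add_left (abs_add_le _ _) _)
    _ ≤ m * (Real.sqrt lam * χ * 1) + m' * (Real.sqrt lam * χ * (Real.sqrt lam * χ'))
          + L * (m * (Real.sqrt lam * χ * (Real.sqrt lam * χ))) :=
        add_le_add (add_le_add h1 h2) (h3.trans (mul_le_mul_of_nonneg_right hL hsq))
    _ = _ := by linear_combination (↑m' * χ * χ' + ↑L * ↑m * χ ^ 2) * hs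

/-- Decryption noise bound (the quantitative part of Theorem 6.1). -/
theorem maabipfe_noise_bound
    (lam χ χ' : ℝ) (hlam : 0 ≤ lam) (hχ : 0 ≤ χ) (hχ' : 0 ≤ χ')
    (m m' L : ℕ)
    {ι : Type*} [Fintype ι] (hι : Fintype.card ι ≤ L)
    (e3 w : Fin m → ℤ) (e2 r : Fin m' → ℤ)
    (e1 k : ι → Fin m → ℤ)
    (hw : ∀ j, w j = 0 ∨ w j = 1)
    (he3 : ∀ j, |(e3 j : ℝ)| ≤ Real.sqrt lam * χ)
    (he2 : ∀ j, |(e2 j : ℝ)| ≤ Real.sqrt lam * χ)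
    (he1 : ∀ i j, |(e1 i j : ℝ)| ≤ Real.sqrt lam * χ)
    (hk : ∀ i j, |(k i j : ℝ)| ≤ Real.sqrt lam * χ)
    (hr : ∀ j, |(r j : ℝ)| ≤ Real.sqrt lam * χ') :
    |((e3 ⬝ᵥ w + e2 ⬝ᵥ r - ∑ i, e1 i ⬝ᵥ k i : ℤ) : ℝ)|
      ≤ Real.sqrt lam * χ * m + lam * χ * χ' * m' + lam * χ ^ 2 * m * L :=
  maabipfe_noise_bound_general lam χ χ' hlam m m' L hι e3 w e2 r e1 k hw he3 he2 he1 hk hr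
end

section
/- Exact recovery under modulus switching (the core of Theorem 8.1, correctness of the noiseless MA-ABIPFE scheme): Let n, p, q, B₀ be natural numbers with 0 < p and n·p² + 2·p·B₀ < q. Let u, v ∈ ℤⁿ be integer vectors with |v_i| ≤ p for every i, and let ẽ ∈ ℤ be an integer with |ẽ| ≤ B₀. Define the encoded vector E ∈ ℤⁿ by E_i := round((q/p)·u_i), where round is rounding of a real number to the nearest integer. Then round((p/q)·(Σ_{i=1}^n E_i·v_i + ẽ)) = Σ_{i=1}^n u_i·v_i, i.e., the modulus-switched decryption recovers the exact integer inner product. -/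
/-! Encoding `u ↦ round (c * u)` with `c = q / p` perturbs each coordinate by at most `1/2`, so the
decrypted value `c⁻¹ * (⟪round (c • u), v⟫ + e)` differs from `⟪u, v⟫` by at most
`c⁻¹ * (n * p / 2 + B₀)`, which the bound `n p² + 2 p B₀ < q` makes smaller than `1/2`;
rounding then returns the integer `⟪u, v⟫` exactly. -/

section

variable {α : Type*} [Field α] [LinearOrder α] [FloorRing α]

theorem inv_mul_sum_round_mul_add {ι : Type*} [Fintype ι] {c : α} (hc : c ≠ 0)
    (u v : ι → ℤ) (e : ℤ) :
    c⁻¹ * ((∑ i, round (c * u i) * v i + e : ℤ) : α) =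
      ((∑ i, u i * v i : ℤ) : α) + c⁻¹ * (∑ i, ((round (c * u i) : α) - c * u i) * v i + e) := by
  have hsplit : ∀ i, ((round (c * u i) : α) - c * u i) * v i =
      (round (c * u i) : α) * v i - c * (u i * v i) := fun i => by ring
  simp only [hsplit, Finset.sum_sub_distrib, ← Finset.mul_sum]
  push_cast
  field_simp
  ring

variable [IsStrictOrderedRing α]

theorem round_intCast_add_of_abs_lt (m : ℤ) {x : α} (hx : |x| < 1 / 2) :
    round ((m : α) + x) = m := by
  have hx0 : round x = 0 := round_eq_zero_iff.mpr ⟨(abs_lt.mp hx).1.le, (abs_lt.mp hx).2⟩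
  rw [round_intCast_add, hx0, add_zero]

theorem abs_sum_round_mul_sub_mul_le {ι : Type*} [Fintype ι] (c : α) (u v : ι → ℤ) {B : α}
    (hv : ∀ i, |(v i : α)| ≤ B) :
    |∑ i, ((round (c * u i) : α) - c * u i) * v i| ≤ Fintype.card ι * B / 2 :=
  calc |∑ i, ((round (c * u i) : α) - c * u i) * v i|
      ≤ ∑ i, |((round (c * u i) : α) - c * u i) * v i| := Finset.abs_sum_le_sum_abs _ _
    _ ≤ ∑ _i : ι, 1 / 2 * B := by
        refine Finset.sum_le_sum fun i _ => ?_
        rw [abs_mul, abs_sub_comm]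
        exact mul_le_mul (abs_sub_round _) (hv i) (abs_nonneg _) (by norm_num)
    _ = Fintype.card ι * B / 2 := by rw [Finset.sum_const, Finset.card_univ, nsmul_eq_mul]; ring

theorem round_inv_mul_sum_round_mul_add {ι : Type*} [Fintype ι] {c B E : α} (hc : 0 < c)
    (u v : ι → ℤ) (e : ℤ) (hv : ∀ i, |(v i : α)| ≤ B) (he : |(e : α)| ≤ E)
    (hcBE : Fintype.card ι * B + 2 * E < c) :
    round (c⁻¹ * ((∑ i, round (c * u i) * v i + e : ℤ) : α)) = ∑ i, u i * v i := by
  rw [inv_mul_sum_round_mul_add hc.ne']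
  apply round_intCast_add_of_abs_lt
  have herr : |∑ i, ((round (c * u i) : α) - c * u i) * v i + e| ≤ Fintype.card ι * B / 2 + E :=
    (abs_add_le _ _).trans (add_le_add (abs_sum_round_mul_sub_mul_le c u v hv) he)
  rw [abs_mul, abs_inv, abs_of_pos hc, inv_mul_lt_iff₀ hc]
  linarith

end

/-- Exact recovery under modulus switching (the core of Theorem 8.1,
correctness of the noiseless MA-ABIPFE scheme). -/
theorem modulus_switching_exact_recovery
    (n p q B₀ : ℕ) (hp : 0 < p) (hq : n * p ^ 2 + 2 * p * B₀ < q)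
    (u v : Fin n → ℤ) (hv : ∀ i, |v i| ≤ (p : ℤ))
    (e : ℤ) (he : |e| ≤ (B₀ : ℤ)) :
    round (((p : ℝ) / (q : ℝ)) *
        (((∑ i, round (((q : ℝ) / (p : ℝ)) * (u i : ℝ)) * v i) + e : ℤ) : ℝ))
      = ∑ i, u i * v i := by
  have hpR : (0 : ℝ) < p := by exact_mod_cast hp
  have hqR : (0 : ℝ) < q := by exact_mod_cast (Nat.zero_le _).trans_lt hq
  have hq' : (n * p + 2 * B₀) * p < q := by nlinarith
  rw [← inv_div]
  refine round_inv_mul_sum_round_mul_add (div_pos hqR hpR) u v e (B := (p : ℝ)) (E := (B₀ : ℝ))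
    (fun i => by exact_mod_cast hv i) (by exact_mod_cast he) ?_
  rw [lt_div_iff₀ hpR, Fintype.card_fin]
  exact_mod_cast hq'
end

section
/- The probability that a discrete Gaussian vector over ℤ^m equals the all-zero vector is exponentially small (the quantitative claim in the proof of Theorem 7.2, with explicit constant c = 2/3): For every real σ > 0 and every natural number m ≥ 1, (∑'_{x : Fin m → ℤ} exp(−π·(Σ_i (x i)²)/σ²))⁻¹ ≤ exp(−(2/3)·m·exp(−π/σ²)). -/
/-!
The Gaussian weight of `x ∈ ℤ^m` is the product of the one-dimensional weights of its
coordinates, so the total mass is `θ^m` with `θ = ∑_{n ∈ ℤ} exp(-a n²)`, `a = π/σ²`.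
Keeping only `n ∈ {0, ±1}` gives `θ ≥ 1 + 2t` with `t = exp(-a) ∈ (0, 1]`, and on `[0, 1]`
one has `1 + 2t ≥ exp(2t/3)` (compare with `1/(1 - 2t/3)`), whence `θ^{-m} ≤ exp(-(2/3) m t)`.
-/

open Real

lemma hasSum_fin_pi_prod {β : Type*} {g : β → ℝ} (hg : Summable g) (hg0 : ∀ b, 0 ≤ g b)
    (m : ℕ) :
    HasSum (fun x : Fin m → β => ∏ i, g (x i)) ((∑' b, g b) ^ m) := by
  induction m with
  | zero => simp
  | succ m ih =>
    rw [← (Fin.consEquiv fun _ => β).hasSum_iff, pow_succ']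
    have hprod := hg.mul_of_nonneg ih.summable hg0 fun x =>
      Finset.prod_nonneg fun i _ => hg0 (x i)
    simpa [Function.comp_def, Fin.consEquiv, Fin.prod_univ_succ] using
      hg.hasSum.mul ih hprod

lemma hasSum_pi_prod {ι β : Type*} [Fintype ι] {g : β → ℝ} (hg : Summable g)
    (hg0 : ∀ b, 0 ≤ g b) :
    HasSum (fun x : ι → β => ∏ i, g (x i)) ((∑' b, g b) ^ Fintype.card ι) := by
  let e := (Fintype.equivFin ι).arrowCongr (Equiv.refl β)
  rw [← e.symm.hasSum_iff]
  convert hasSum_fin_pi_prod hg hg0 (Fintype.card ι) using 2 with x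
  exact Fintype.prod_equiv (Fintype.equivFin ι) _ _ fun i => by simp [e]

lemma summable_exp_neg_mul_int_sq {a : ℝ} (ha : 0 < a) :
    Summable fun n : ℤ => exp (-(a * n ^ 2)) := by
  have h := HurwitzKernelBounds.summable_f_int 0 0 (div_pos ha pi_pos)
  unfold HurwitzKernelBounds.f_int at h
  convert h using 2 with n
  simp only [add_zero, pow_zero, one_mul]
  field_simp

lemma one_add_two_mul_exp_neg_le_tsum_exp_neg_mul_int_sq {a : ℝ} (ha : 0 < a) :
    1 + 2 * exp (-a) ≤ ∑' n : ℤ, exp (-(a * n ^ 2)) := by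
  have hle := (summable_exp_neg_mul_int_sq ha).sum_le_tsum {0, 1, -1}
    (fun n _ => (exp_pos _).le)
  have hsum : ∑ n ∈ ({0, 1, -1} : Finset ℤ), exp (-(a * n ^ 2)) = 1 + 2 * exp (-a) := by
    rw [Finset.sum_insert (by decide), Finset.sum_pair (by decide)]
    norm_num
    ring
  linarith

lemma exp_two_thirds_mul_le_one_add_two_mul {t : ℝ} (ht0 : 0 ≤ t) (ht1 : t ≤ 1) :
    exp (2 / 3 * t) ≤ 1 + 2 * t := by
  have hpos : 0 < 1 - 2 / 3 * t := by linarith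
  calc exp (2 / 3 * t) = (exp (-(2 / 3 * t)))⁻¹ := by rw [exp_neg, inv_inv]
    _ ≤ (1 - 2 / 3 * t)⁻¹ := inv_anti₀ hpos (by linarith [add_one_le_exp (-(2 / 3 * t))])
    _ ≤ 1 + 2 * t := by
      rw [inv_le_iff_one_le_mul₀ hpos]
      nlinarith

lemma inv_tsum_exp_neg_mul_int_sq_le {a : ℝ} (ha : 0 < a) :
    (∑' n : ℤ, exp (-(a * n ^ 2)))⁻¹ ≤ exp (-(2 / 3 * exp (-a))) := by
  have hexp : exp (-a) ≤ 1 := exp_le_one_iff.mpr (by linarith)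
  rw [exp_neg]
  exact inv_anti₀ (exp_pos _) <| (exp_two_thirds_mul_le_one_add_two_mul (exp_pos _).le hexp).trans
    (one_add_two_mul_exp_neg_le_tsum_exp_neg_mul_int_sq ha)

lemma tsum_exp_neg_mul_sum_sq_eq_pow {ι : Type*} [Fintype ι] {a : ℝ} (ha : 0 < a) :
    ∑' x : ι → ℤ, exp (-(a * ∑ i, (x i : ℝ) ^ 2)) =
      (∑' n : ℤ, exp (-(a * n ^ 2))) ^ Fintype.card ι := by
  simp_rw [Finset.mul_sum, ← Finset.sum_neg_distrib, exp_sum]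
  exact (hasSum_pi_prod (summable_exp_neg_mul_int_sq ha) fun _ => (exp_pos _).le).tsum_eq

lemma inv_tsum_exp_neg_mul_sum_sq_le {ι : Type*} [Fintype ι] {a : ℝ} (ha : 0 < a) :
    (∑' x : ι → ℤ, exp (-(a * ∑ i, (x i : ℝ) ^ 2)))⁻¹ ≤
      exp (-(2 / 3 * Fintype.card ι * exp (-a))) := by
  rw [tsum_exp_neg_mul_sum_sq_eq_pow ha, ← inv_pow]
  calc _ ≤ exp (-(2 / 3 * exp (-a))) ^ Fintype.card ι :=
        pow_le_pow_left₀ (inv_nonneg.mpr (tsum_nonneg fun _ => (exp_pos _).le))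
          (inv_tsum_exp_neg_mul_int_sq_le ha) _
    _ = _ := by rw [← exp_nat_mul]; ring_nf

theorem discrete_gaussian_zero_probability_bound_general
    (σ : ℝ) (hσ : 0 < σ) (m : ℕ) :
    (∑' x : Fin m → ℤ, Real.exp (-(π * (∑ i, ((x i : ℝ)) ^ 2) / σ ^ 2)))⁻¹
      ≤ Real.exp (-((2 / 3) * (m : ℝ) * Real.exp (-(π / σ ^ 2)))) := by
  have hrw (x : Fin m → ℤ) :
      -(π * (∑ i, (x i : ℝ) ^ 2) / σ ^ 2) = -(π / σ ^ 2 * ∑ i, (x i : ℝ) ^ 2) := by ring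
  simp_rw [hrw]
  simpa using inv_tsum_exp_neg_mul_sum_sq_le (ι := Fin m) (by positivity : 0 < π / σ ^ 2)

/-- The probability that a discrete Gaussian vector over ℤ^m is the zero
vector is exponentially small (with explicit constant c = 2/3). -/
theorem discrete_gaussian_zero_probability_bound
    (σ : ℝ) (hσ : 0 < σ) (m : ℕ) (hm : 1 ≤ m) :
    (∑' x : Fin m → ℤ, Real.exp (-(π * (∑ i, ((x i : ℝ)) ^ 2) / σ ^ 2)))⁻¹
      ≤ Real.exp (-((2 / 3) * (m : ℝ) * Real.exp (-(π / σ ^ 2)))) :=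
  discrete_gaussian_zero_probability_bound_general σ hσ m
end
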